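/- arXiv:1701.00140 — 3 statements merged into one kernel-verified Lean document; each statement's English description precedes it below -/
import Mathlib

section
/- Let ω = exp(πi/4) ∈ ℂ and consider linear operators on ℂ^{(Fin 4 → ZMod 2)} acting on the standard basis vectors e_x, x : Fin 4 → ZMod 2. For i : Fin 4 let T_i be the diagonal operator with T_i e_x = ω^{(x i).val} • e_x; for i < j let U_{i,j} be the diagonal operator with U_{i,j} e_x = ω^{(x i + x j).val} • e_x; for i < j < k let V_{i,j,k} be the diagonal operator with V_{i,j,k} e_x = ω^{(x i + x j + x k).val} • e_x. Then the diagonal operator D with D e_x = ω^{(x 0 + x 1 + x 2 + x 3).val} • e_x equals the product (∏_{i} T_i^5) * (∏_{i<j} U_{i,j}^3) * (∏_{i<j<k} V_{i,j,k}). -/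
noncomputable section

/-- The standard basis vector `e x` of `ℂ^(Fin 4 → ZMod 2)`. -/
def e (x : Fin 4 → ZMod 2) : (Fin 4 → ZMod 2) → ℂ := Pi.single x 1

/-- `ω = exp (π i / 4)`. -/
def ω : ℂ := Complex.exp (Real.pi * Complex.I / 4)

lemma hω8 : ω ^ 8 = 1 := by
  rw [ω, ← Complex.exp_nat_mul]
  have : (8:ℕ) * (↑Real.pi * Complex.I / 4) = 2 * Real.pi * Complex.I := by ring
  rw [this, Complex.exp_two_pi_mul_I]

lemma ωmod (n : ℕ) : ω ^ n = ω ^ (n % 8) := by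
  conv_lhs => rw [← Nat.div_add_mod n 8]
  rw [pow_add, pow_mul, hω8, one_pow, one_mul]

lemma ωpow_eq (m n : ℕ) (h : m % 8 = n % 8) : ω ^ m = ω ^ n := by
  rw [ωmod, ωmod n, h]

lemma key (a b c d : ZMod 2) :
    ((ω^a.val)^5 * (ω^b.val)^5 * (ω^c.val)^5 * (ω^d.val)^5) *
    ((ω^(a+b).val)^3 * (ω^(a+c).val)^3 * (ω^(a+d).val)^3 *
      (ω^(b+c).val)^3 * (ω^(b+d).val)^3 * (ω^(c+d).val)^3) *
    (ω^(a+b+c).val * ω^(a+b+d).val * ω^(a+c+d).val * ω^(b+c+d).val)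
    = ω^(a+b+c+d).val := by
  have hz : ∀ a : ZMod 2, a = 0 ∨ a = 1 := by decide
  rcases hz a with rfl|rfl <;> rcases hz b with rfl|rfl <;>
    rcases hz c with rfl|rfl <;> rcases hz d with rfl|rfl <;>
    simp only [← pow_mul, ← pow_add] <;> exact ωpow_eq _ _ (by decide)

lemma pow_apply_e (f : Module.End ℂ ((Fin 4 → ZMod 2) → ℂ)) (c : ℂ)
    (x : Fin 4 → ZMod 2) (h : f (e x) = c • e x) (n : ℕ) :
    (f ^ n) (e x) = c ^ n • e x := by
  induction n with
  | zero => simp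
  | succ n ih =>
    rw [pow_succ, Module.End.mul_apply, h, map_smul, ih, smul_smul, pow_succ]
    ring_nf

theorem stmt5
    (T : Fin 4 → Module.End ℂ ((Fin 4 → ZMod 2) → ℂ))
    (U : Fin 4 → Fin 4 → Module.End ℂ ((Fin 4 → ZMod 2) → ℂ))
    (V : Fin 4 → Fin 4 → Fin 4 → Module.End ℂ ((Fin 4 → ZMod 2) → ℂ))
    (D : Module.End ℂ ((Fin 4 → ZMod 2) → ℂ))
    (hT : ∀ i : Fin 4, ∀ x : Fin 4 → ZMod 2, T i (e x) = ω ^ (x i).val • e x)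
    (hU : ∀ i j : Fin 4, i < j → ∀ x : Fin 4 → ZMod 2,
      U i j (e x) = ω ^ (x i + x j).val • e x)
    (hV : ∀ i j k : Fin 4, i < j → j < k → ∀ x : Fin 4 → ZMod 2,
      V i j k (e x) = ω ^ (x i + x j + x k).val • e x)
    (hD : ∀ x : Fin 4 → ZMod 2,
      D (e x) = ω ^ (x 0 + x 1 + x 2 + x 3).val • e x) :
    D = (T 0 ^ 5 * T 1 ^ 5 * T 2 ^ 5 * T 3 ^ 5) *
        (U 0 1 ^ 3 * U 0 2 ^ 3 * U 0 3 ^ 3 * U 1 2 ^ 3 * U 1 3 ^ 3 * U 2 3 ^ 3) *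
        (V 0 1 2 * V 0 1 3 * V 0 2 3 * V 1 2 3) := by
  apply Module.Basis.ext (Pi.basisFun ℂ (Fin 4 → ZMod 2))
  intro x
  have hex : Pi.basisFun ℂ (Fin 4 → ZMod 2) x = e x := Pi.basisFun_apply ℂ _ x
  rw [hex, hD]
  simp only [Module.End.mul_apply,
    hV 0 1 2 (by decide) (by decide), hV 0 1 3 (by decide) (by decide),
    hV 0 2 3 (by decide) (by decide), hV 1 2 3 (by decide) (by decide),
    map_smul,
    pow_apply_e (U 0 1) _ x (hU 0 1 (by decide) x),
    pow_apply_e (U 0 2) _ x (hU 0 2 (by decide) x),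
    pow_apply_e (U 0 3) _ x (hU 0 3 (by decide) x),
    pow_apply_e (U 1 2) _ x (hU 1 2 (by decide) x),
    pow_apply_e (U 1 3) _ x (hU 1 3 (by decide) x),
    pow_apply_e (U 2 3) _ x (hU 2 3 (by decide) x),
    pow_apply_e (T 0) _ x (hT 0 x), pow_apply_e (T 1) _ x (hT 1 x),
    pow_apply_e (T 2) _ x (hT 2 x), pow_apply_e (T 3) _ x (hT 3 x),
    smul_smul]
  rw [← key (x 0) (x 1) (x 2) (x 3)]
  ring_nf
end
end

section
/- Fix n : ℕ. Call a function p : (Fin n → ZMod 2) → ZMod 8 a phase normal form with data (a₀, a, b, c), where a₀ : ZMod 8, a : Fin n → ZMod 8, b assigns to each pair i < j in Fin n an element of ZMod 4, and c assigns to each triple i < j < k in Fin n an element of ZMod 2, if for all x: p x = a₀ + ∑_i (a i)·⟨x i⟩ + ∑_{i<j} ⟨b i j⟩·⟨x i + x j⟩ + ∑_{i<j<k} ⟨c i j k⟩·⟨x i + x j + x k⟩, where ⟨·⟩ denotes casting the natural-number value into ZMod 8 and outer arithmetic is in ZMod 8. Then: for any two phase normal forms p and p' with data (a₀,a,b,c)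 and (a₀',a',b',c'), there exists a multivariate polynomial q over ZMod 8 in variables Fin n with degree at most 1 in each variable (i.e., MvPolynomial.degreeOf i q ≤ 1 for all i) such that for every x : Fin n → ZMod 2, evaluating q at the point (fun i => ((x i).val : ZMod 8)) yields p x − p' x; moreover, if (a₀,a,b,c) ≠ (a₀',a',b',c') then q ≠ 0. -/
open scoped BigOperators

/-- The type of pairs `i < j` in `Fin n`. -/
abbrev Pair (n : ℕ) := {p : Fin n × Fin n // p.1 < p.2}

/-- The type of triples `i < j < k` in `Fin n`. -/
abbrev Triple (n : ℕ) := {t : Fin n × Fin n × Fin n // t.1 < t.2.1 ∧ t.2.1 < t.2.2}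

/-- The phase normal form with data `(a₀, a, b, c)`, as a function
`(Fin n → ZMod 2) → ZMod 8`. Here `⟨·⟩` is realized by casting `.val` into `ZMod 8`. -/
def pnf {n : ℕ} (a₀ : ZMod 8) (a : Fin n → ZMod 8) (b : Pair n → ZMod 4)
    (c : Triple n → ZMod 2) (x : Fin n → ZMod 2) : ZMod 8 :=
  a₀ + ∑ i : Fin n, a i * ((x i).val : ZMod 8)
    + ∑ p : Pair n, ((b p).val : ZMod 8) * ((x p.val.1 + x p.val.2).val : ZMod 8)
    + ∑ t : Triple n,
        ((c t).val : ZMod 8) * ((x t.val.1 + x t.val.2.1 + x t.val.2.2).val : ZMod 8)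

open Finsupp MvPolynomial

section helpers
variable {n : ℕ}

noncomputable def e1 (i : Fin n) : Fin n →₀ ℕ := Finsupp.single i 1
noncomputable def e2 (i j : Fin n) : Fin n →₀ ℕ := e1 i + e1 j
noncomputable def e3 (i j k : Fin n) : Fin n →₀ ℕ := e1 i + e1 j + e1 k

def M (d : Fin n →₀ ℕ) : ℕ := d.sum fun _ v => v
@[simp] lemma M_zero : M (0 : Fin n →₀ ℕ) = 0 := Finsupp.sum_zero_index
@[simp] lemma M_e1 (i : Fin n) : M (e1 i) = 1 := Finsupp.sum_single_index rfl
lemma M_add (f g : Fin n →₀ ℕ) : M (f + g) = M f + M g :=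
  Finsupp.sum_add_index' (fun _ => rfl) (fun _ _ _ => rfl)
@[simp] lemma M_e2 (i j : Fin n) : M (e2 i j) = 2 := by simp [e2, M_add]
@[simp] lemma M_e3 (i j k : Fin n) : M (e3 i j k) = 3 := by simp [e3, e2, M_add]

lemma zero_ne_e1 (i : Fin n) : (0 : Fin n →₀ ℕ) ≠ e1 i := fun h => by
  have := congrArg M h; simp at this
lemma zero_ne_e2 (i j : Fin n) : (0 : Fin n →₀ ℕ) ≠ e2 i j := fun h => by
  have := congrArg M h; simp at this
lemma zero_ne_e3 (i j k : Fin n) : (0 : Fin n →₀ ℕ) ≠ e3 i j k := fun h => by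
  have := congrArg M h; simp at this
lemma e1_ne_e2 (m i j : Fin n) : e1 m ≠ e2 i j := fun h => by
  have := congrArg M h; simp at this
lemma e1_ne_e3 (m i j k : Fin n) : e1 m ≠ e3 i j k := fun h => by
  have := congrArg M h; simp at this
lemma e2_ne_e3 (a b i j k : Fin n) : e2 a b ≠ e3 i j k := fun h => by
  have := congrArg M h; simp at this
lemma e2_ne_e1 (i j m : Fin n) : e2 i j ≠ e1 m := (e1_ne_e2 m i j).symm
lemma e3_ne_e1 (i j k m : Fin n) : e3 i j k ≠ e1 m := (e1_ne_e3 m i j k).symm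
lemma e3_ne_e2 (i j k a b : Fin n) : e3 i j k ≠ e2 a b := (e2_ne_e3 a b i j k).symm
lemma e1_ne_zero (i : Fin n) : e1 i ≠ (0 : Fin n →₀ ℕ) := (zero_ne_e1 i).symm
lemma e2_ne_zero (i j : Fin n) : e2 i j ≠ (0 : Fin n →₀ ℕ) := (zero_ne_e2 i j).symm
lemma e3_ne_zero (i j k : Fin n) : e3 i j k ≠ (0 : Fin n →₀ ℕ) := (zero_ne_e3 i j k).symm

lemma xor2 (u v : ZMod 2) :
    (((u + v).val : ZMod 8)) = (u.val : ZMod 8) + v.val - 2 * (u.val * v.val) := by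
  revert u v; decide

lemma xor3 (u v w : ZMod 2) :
    (((u + v + w).val : ZMod 8)) = (u.val : ZMod 8) + v.val + w.val
      - 2 * ((u.val : ZMod 8) * v.val + (u.val : ZMod 8) * w.val + (v.val : ZMod 8) * w.val)
      + 4 * ((u.val : ZMod 8) * v.val * w.val) := by
  revert u v w; decide

lemma e3_apply_ne (i j k m : Fin n) : (e3 i j k) m ≠ 0 ↔ (m = i ∨ m = j ∨ m = k) := by
  simp only [e3, e1, Finsupp.add_apply, Finsupp.single_apply]
  split_ifs <;> simp_all [eq_comm]

lemma e2_apply_ne (i j m : Fin n) : (e2 i j) m ≠ 0 ↔ (m = i ∨ m = j) := by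
  simp only [e2, e1, Finsupp.add_apply, Finsupp.single_apply]
  split_ifs <;> simp_all [eq_comm]

lemma e3_inj {i j k i' j' k' : Fin n} (hij : i < j) (hjk : j < k) (hij' : i' < j')
    (hjk' : j' < k') (h : e3 i j k = e3 i' j' k') : i = i' ∧ j = j' ∧ k = k' := by
  have key : ∀ m : Fin n, (m = i ∨ m = j ∨ m = k) ↔ (m = i' ∨ m = j' ∨ m = k') := by
    intro m; rw [← e3_apply_ne, h, e3_apply_ne]
  have v : ∀ m m' : Fin n, m = m' → m.val = m'.val := fun _ _ h => by rw [h]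
  have f1 := (key i).mp (Or.inl rfl)
  have f2 := (key j).mp (Or.inr (Or.inl rfl))
  have f3 := (key k).mp (Or.inr (Or.inr rfl))
  have g1 := (key i').mpr (Or.inl rfl)
  have hij : i.val < j.val := hij
  have hjk : j.val < k.val := hjk
  have hij' : i'.val < j'.val := hij'
  have hjk' : j'.val < k'.val := hjk'
  have F1 : i.val = i'.val ∨ i.val = j'.val ∨ i.val = k'.val := by
    rcases f1 with h|h|h <;> [exact Or.inl (v _ _ h); exact Or.inr (Or.inl (v _ _ h));
      exact Or.inr (Or.inr (v _ _ h))]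
  have F2 : j.val = i'.val ∨ j.val = j'.val ∨ j.val = k'.val := by
    rcases f2 with h|h|h <;> [exact Or.inl (v _ _ h); exact Or.inr (Or.inl (v _ _ h));
      exact Or.inr (Or.inr (v _ _ h))]
  have F3 : k.val = i'.val ∨ k.val = j'.val ∨ k.val = k'.val := by
    rcases f3 with h|h|h <;> [exact Or.inl (v _ _ h); exact Or.inr (Or.inl (v _ _ h));
      exact Or.inr (Or.inr (v _ _ h))]
  have G1 : i'.val = i.val ∨ i'.val = j.val ∨ i'.val = k.val := by
    rcases g1 with h|h|h <;> [exact Or.inl (v _ _ h); exact Or.inr (Or.inl (v _ _ h));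
      exact Or.inr (Or.inr (v _ _ h))]
  refine ⟨Fin.ext ?_, Fin.ext ?_, Fin.ext ?_⟩ <;> omega

lemma e2_inj {i j i' j' : Fin n} (hij : i < j) (hij' : i' < j')
    (h : e2 i j = e2 i' j') : i = i' ∧ j = j' := by
  have key : ∀ m : Fin n, (m = i ∨ m = j) ↔ (m = i' ∨ m = j') := by
    intro m; rw [← e2_apply_ne, h, e2_apply_ne]
  have v : ∀ m m' : Fin n, m = m' → m.val = m'.val := fun _ _ h => by rw [h]
  have f1 := (key i).mp (Or.inl rfl)
  have f2 := (key j).mp (Or.inr rfl)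
  have g1 := (key i').mpr (Or.inl rfl)
  have hij : i.val < j.val := hij
  have hij' : i'.val < j'.val := hij'
  have F1 : i.val = i'.val ∨ i.val = j'.val := by
    rcases f1 with h|h <;> [exact Or.inl (v _ _ h); exact Or.inr (v _ _ h)]
  have F2 : j.val = i'.val ∨ j.val = j'.val := by
    rcases f2 with h|h <;> [exact Or.inl (v _ _ h); exact Or.inr (v _ _ h)]
  have G1 : i'.val = i.val ∨ i'.val = j.val := by
    rcases g1 with h|h <;> [exact Or.inl (v _ _ h); exact Or.inr (v _ _ h)]
  exact ⟨Fin.ext (by omega), Fin.ext (by omega)⟩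

lemma eval_m0 (f : Fin n → ZMod 8) (r : ZMod 8) :
    eval f (monomial (0 : Fin n →₀ ℕ) r) = r := by simp [eval_monomial]

lemma eval_m1 (f : Fin n → ZMod 8) (i : Fin n) (r : ZMod 8) :
    eval f (monomial (e1 i) r) = r * f i := by
  simp [eval_monomial, e1, Finsupp.prod_single_index]

lemma eval_m2 (f : Fin n → ZMod 8) (i j : Fin n) (r : ZMod 8) :
    eval f (monomial (e2 i j) r) = r * (f i * f j) := by
  rw [eval_monomial, e2, Finsupp.prod_add_index' (fun _ => pow_zero _) (fun _ _ _ => pow_add _ _ _)]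
  simp [e1, Finsupp.prod_single_index]

lemma eval_m3 (f : Fin n → ZMod 8) (i j k : Fin n) (r : ZMod 8) :
    eval f (monomial (e3 i j k) r) = r * (f i * f j * f k) := by
  rw [eval_monomial, e3,
    Finsupp.prod_add_index' (fun _ => pow_zero _) (fun _ _ _ => pow_add _ _ _),
    Finsupp.prod_add_index' (fun _ => pow_zero _) (fun _ _ _ => pow_add _ _ _)]
  simp [e1, Finsupp.prod_single_index, mul_assoc]

lemma degreeOf_monomial_le (i : Fin n) (e : Fin n →₀ ℕ) (r : ZMod 8) :
    degreeOf i (monomial e r) ≤ e i := by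
  rw [degreeOf_le_iff]
  intro m hm
  have := support_monomial_subset hm
  simp only [Finset.mem_singleton] at this
  rw [this]

lemma e1_apply_le (i m : Fin n) : (e1 i) m ≤ 1 := by
  simp only [e1, Finsupp.single_apply]; split_ifs <;> omega

lemma e2_apply_le {i j : Fin n} (hij : i ≠ j) (m : Fin n) : (e2 i j) m ≤ 1 := by
  simp only [e2, e1, Finsupp.add_apply, Finsupp.single_apply]
  split_ifs <;> simp_all

lemma e3_apply_le {i j k : Fin n} (hij : i ≠ j) (hik : i ≠ k) (hjk : j ≠ k) (m : Fin n) :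
    (e3 i j k) m ≤ 1 := by
  simp only [e3, e1, Finsupp.add_apply, Finsupp.single_apply]
  split_ifs <;> simp_all

lemma degreeOf_sum_le_one {α : Type*} (s : Finset α) (f : α → MvPolynomial (Fin n) (ZMod 8))
    (i : Fin n) (h : ∀ a ∈ s, degreeOf i (f a) ≤ 1) : degreeOf i (∑ a ∈ s, f a) ≤ 1 := by
  classical
  induction s using Finset.induction_on with
  | empty => simp
  | @insert a s ha ih =>
    rw [Finset.sum_insert ha]
    refine le_trans (degreeOf_add_le _ _ _) (max_le (h a (Finset.mem_insert_self a s)) ?_)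
    exact ih fun x hx => h x (Finset.mem_insert_of_mem hx)

lemma c_ne (u v : ZMod 2) (h : u ≠ v) :
    (4 : ZMod 8) * ((u.val : ZMod 8) - (v.val : ZMod 8)) ≠ 0 := by revert u v; decide

lemma b_ne (u v : ZMod 4) (h : u ≠ v) :
    -((2 : ZMod 8) * ((u.val : ZMod 8) - (v.val : ZMod 8))) ≠ 0 := by revert u v; decide

end helpers

theorem stmt6 {n : ℕ} (p p' : (Fin n → ZMod 2) → ZMod 8)
    (a₀ : ZMod 8) (a : Fin n → ZMod 8) (b : Pair n → ZMod 4) (c : Triple n → ZMod 2)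
    (a₀' : ZMod 8) (a' : Fin n → ZMod 8) (b' : Pair n → ZMod 4) (c' : Triple n → ZMod 2)
    (hp : ∀ x, p x = pnf a₀ a b c x) (hp' : ∀ x, p' x = pnf a₀' a' b' c' x) :
    ∃ q : MvPolynomial (Fin n) (ZMod 8),
      (∀ i : Fin n, MvPolynomial.degreeOf i q ≤ 1) ∧
      (∀ x : Fin n → ZMod 2,
        MvPolynomial.eval (fun i => ((x i).val : ZMod 8)) q = p x - p' x) ∧
      ((a₀, a, b, c) ≠ (a₀', a', b', c') → q ≠ 0) := by
  classical
  set B : Pair n → ZMod 8 := fun pp => ((b pp).val : ZMod 8) - ((b' pp).val : ZMod 8) with hBdef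
  set C : Triple n → ZMod 8 := fun t => ((c t).val : ZMod 8) - ((c' t).val : ZMod 8) with hCdef
  refine ⟨monomial 0 (a₀ - a₀')
      + ∑ i : Fin n, monomial (e1 i) (a i - a' i)
      + ∑ pp : Pair n, (monomial (e1 pp.1.1) (B pp) + monomial (e1 pp.1.2) (B pp)
          + monomial (e2 pp.1.1 pp.1.2) (-(2 * B pp)))
      + ∑ t : Triple n, (monomial (e1 t.1.1) (C t) + monomial (e1 t.1.2.1) (C t)
          + monomial (e1 t.1.2.2) (C t)
          + monomial (e2 t.1.1 t.1.2.1) (-(2 * C t)) + monomial (e2 t.1.1 t.1.2.2) (-(2 * C t))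
          + monomial (e2 t.1.2.1 t.1.2.2) (-(2 * C t))
          + monomial (e3 t.1.1 t.1.2.1 t.1.2.2) (4 * C t)), ?_, ?_, ?_⟩
  · -- degrees
    intro i
    refine le_trans (degreeOf_add_le _ _ _) (max_le (le_trans (degreeOf_add_le _ _ _)
      (max_le (le_trans (degreeOf_add_le _ _ _) (max_le ?_ ?_)) ?_)) ?_)
    · exact le_trans (degreeOf_monomial_le _ _ _) (by simp)
    · exact degreeOf_sum_le_one _ _ _ fun j _ =>
        le_trans (degreeOf_monomial_le _ _ _) (e1_apply_le _ _)
    · refine degreeOf_sum_le_one _ _ _ fun pp _ => ?_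
      refine le_trans (degreeOf_add_le _ _ _) (max_le (le_trans (degreeOf_add_le _ _ _)
        (max_le ?_ ?_)) ?_)
      · exact le_trans (degreeOf_monomial_le _ _ _) (e1_apply_le _ _)
      · exact le_trans (degreeOf_monomial_le _ _ _) (e1_apply_le _ _)
      · exact le_trans (degreeOf_monomial_le _ _ _) (e2_apply_le (ne_of_lt pp.2) _)
    · refine degreeOf_sum_le_one _ _ _ fun t _ => ?_
      have h12 : t.1.1 ≠ t.1.2.1 := ne_of_lt t.2.1
      have h23 : t.1.2.1 ≠ t.1.2.2 := ne_of_lt t.2.2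
      have h13 : t.1.1 ≠ t.1.2.2 := ne_of_lt (lt_trans t.2.1 t.2.2)
      refine le_trans (degreeOf_add_le _ _ _) (max_le (le_trans (degreeOf_add_le _ _ _)
        (max_le (le_trans (degreeOf_add_le _ _ _) (max_le (le_trans (degreeOf_add_le _ _ _)
        (max_le (le_trans (degreeOf_add_le _ _ _) (max_le (le_trans (degreeOf_add_le _ _ _)
        (max_le ?_ ?_)) ?_)) ?_)) ?_)) ?_)) ?_)
      · exact le_trans (degreeOf_monomial_le _ _ _) (e1_apply_le _ _)
      · exact le_trans (degreeOf_monomial_le _ _ _) (e1_apply_le _ _)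
      · exact le_trans (degreeOf_monomial_le _ _ _) (e1_apply_le _ _)
      · exact le_trans (degreeOf_monomial_le _ _ _) (e2_apply_le h12 _)
      · exact le_trans (degreeOf_monomial_le _ _ _) (e2_apply_le h13 _)
      · exact le_trans (degreeOf_monomial_le _ _ _) (e2_apply_le h23 _)
      · exact le_trans (degreeOf_monomial_le _ _ _) (e3_apply_le h12 h13 h23 _)
  · -- evaluation
    intro x
    rw [hp, hp']
    simp only [map_add, eval_sum, eval_m0, eval_m1, eval_m2, eval_m3]
    rw [Finset.sum_congr rfl (fun pp _ => show
        B pp * ((x pp.1.1).val : ZMod 8) + B pp * ((x pp.1.2).val : ZMod 8)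
          + (-(2 * B pp)) * (((x pp.1.1).val : ZMod 8) * ((x pp.1.2).val : ZMod 8))
        = ((b pp).val : ZMod 8) * ((x pp.1.1 + x pp.1.2).val : ZMod 8)
          - ((b' pp).val : ZMod 8) * ((x pp.1.1 + x pp.1.2).val : ZMod 8) by
      rw [xor2, hBdef]; ring)]
    rw [Finset.sum_congr rfl (fun t _ => show
        C t * ((x t.1.1).val : ZMod 8) + C t * ((x t.1.2.1).val : ZMod 8)
          + C t * ((x t.1.2.2).val : ZMod 8)
          + (-(2 * C t)) * (((x t.1.1).val : ZMod 8) * ((x t.1.2.1).val : ZMod 8))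
          + (-(2 * C t)) * (((x t.1.1).val : ZMod 8) * ((x t.1.2.2).val : ZMod 8))
          + (-(2 * C t)) * (((x t.1.2.1).val : ZMod 8) * ((x t.1.2.2).val : ZMod 8))
          + (4 * C t) * (((x t.1.1).val : ZMod 8) * ((x t.1.2.1).val : ZMod 8)
              * ((x t.1.2.2).val : ZMod 8))
        = ((c t).val : ZMod 8) * ((x t.1.1 + x t.1.2.1 + x t.1.2.2).val : ZMod 8)
          - ((c' t).val : ZMod 8) * ((x t.1.1 + x t.1.2.1 + x t.1.2.2).val : ZMod 8) by
      rw [xor3, hCdef]; ring)]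
    rw [Finset.sum_congr rfl (fun i _ => show
        (a i - a' i) * ((x i).val : ZMod 8)
        = a i * ((x i).val : ZMod 8) - a' i * ((x i).val : ZMod 8) from sub_mul _ _ _)]
    rw [Finset.sum_sub_distrib, Finset.sum_sub_distrib, Finset.sum_sub_distrib]
    unfold pnf
    ring
  · -- nonvanishing
    intro hne h0
    by_cases hc : c = c'
    · by_cases hb : b = b'
      · by_cases ha : a = a'
        · -- constant case
          subst hc; subst hb; subst ha
          have ha0 : a₀ ≠ a₀' := fun h => hne (by rw [h])
          have := congrArg (MvPolynomial.coeff (0 : Fin n →₀ ℕ)) h0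
          simp only [coeff_add, coeff_sum, coeff_monomial, coeff_zero, hBdef, hCdef,
            sub_self, mul_zero, neg_zero, ite_self, Finset.sum_const_zero, add_zero,
            if_pos rfl, e1_ne_zero, if_false, zero_ne_e1] at this
          exact ha0 (sub_eq_zero.mp this)
        · -- linear case
          subst hc; subst hb
          obtain ⟨i0, hi0⟩ := Function.ne_iff.mp ha
          have := congrArg (MvPolynomial.coeff (e1 i0)) h0
          have h11 : ∀ i : Fin n, (e1 i = e1 i0) ↔ i = i0 := fun i =>
            Finsupp.single_left_inj one_ne_zero
          simp only [coeff_add, coeff_sum, coeff_monomial, coeff_zero, hBdef, hCdef,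
            sub_self, mul_zero, neg_zero, ite_self, Finset.sum_const_zero, add_zero,
            zero_ne_e1, if_false, zero_add, h11, Finset.sum_ite_eq',
            Finset.mem_univ, if_pos] at this
          exact hi0 (sub_eq_zero.mp this)
      · -- pair case
        subst hc
        obtain ⟨p0, hp0⟩ := Function.ne_iff.mp hb
        obtain ⟨⟨i0, j0⟩, hlt0⟩ := p0
        have := congrArg (MvPolynomial.coeff (e2 i0 j0)) h0
        have h22 : ∀ pp : Pair n, (e2 pp.1.1 pp.1.2 = e2 i0 j0) ↔ pp = (⟨(i0, j0), hlt0⟩ : Pair n) := by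
          rintro ⟨⟨i1, j1⟩, hlt1⟩
          constructor
          · intro h
            obtain ⟨rfl, rfl⟩ := e2_inj hlt1 hlt0 h
            rfl
          · intro h; rw [h]
        simp only [coeff_add, coeff_sum, coeff_monomial, coeff_zero, hCdef,
          sub_self, mul_zero, neg_zero, ite_self, Finset.sum_const_zero, add_zero,
          zero_ne_e2, e1_ne_e2, if_false, Finset.sum_const_zero, zero_add, h22,
          Finset.sum_ite_eq', Finset.mem_univ, if_pos] at this
        exact b_ne _ _ hp0 this
    · -- triple case
      obtain ⟨t0, ht0⟩ := Function.ne_iff.mp hc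
      obtain ⟨⟨i0, j0, k0⟩, hlt1, hlt2⟩ := t0
      have := congrArg (MvPolynomial.coeff (e3 i0 j0 k0)) h0
      have h33 : ∀ t : Triple n, (e3 t.1.1 t.1.2.1 t.1.2.2 = e3 i0 j0 k0) ↔
          t = (⟨(i0, j0, k0), hlt1, hlt2⟩ : Triple n) := by
        rintro ⟨⟨i1, j1, k1⟩, h1, h2⟩
        constructor
        · intro h
          obtain ⟨rfl, rfl, rfl⟩ := e3_inj h1 h2 hlt1 hlt2 h
          rfl
        · intro h; rw [h]
      simp only [coeff_add, coeff_sum, coeff_monomial, coeff_zero,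
        zero_ne_e3, e1_ne_e3, e2_ne_e3, if_false, Finset.sum_const_zero, add_zero,
        zero_add, h33, Finset.sum_ite_eq', Finset.mem_univ, if_pos] at this
      exact c_ne _ _ ht0 this
end

section
/- For every n : ℕ, the following identity of natural numbers holds: ∏_{i=1}^{n} 2^{i−1}·(2^i − 1) = ∏_{i=1}^{n} (2^n − 2^{i−1}). -/
/-!
Factor `q ^ n - q ^ (i - 1) = q ^ (i - 1) * (q ^ (n + 1 - i) - 1)`; the second factors, as `i` runs
over `1, …, n`, are the factors `q ^ i - 1` in reverse order.
-/

open Finset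

theorem Nat.pow_sub_pow_eq_mul {q i n : ℕ} (h : i ≤ n) :
    q ^ n - q ^ i = q ^ i * (q ^ (n - i) - 1) := by
  rw [Nat.mul_sub, mul_one, ← pow_add, Nat.add_sub_cancel' h]

theorem Finset.prod_Icc_one_reflect {M : Type*} [CommMonoid M] (f : ℕ → M) (n : ℕ) :
    ∏ i ∈ Icc 1 n, f (n + 1 - i) = ∏ i ∈ Icc 1 n, f i := by
  refine prod_nbij' (fun i => n + 1 - i) (fun i => n + 1 - i) ?_ ?_ ?_ ?_ fun i _ => rfl <;>
    intro i hi <;> simp only [mem_Icc] at hi ⊢ <;> omega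

theorem prod_pow_mul_pow_sub_one_eq_prod_pow_sub_pow (q n : ℕ) :
    ∏ i ∈ Icc 1 n, q ^ (i - 1) * (q ^ i - 1) = ∏ i ∈ Icc 1 n, (q ^ n - q ^ (i - 1)) := by
  calc ∏ i ∈ Icc 1 n, q ^ (i - 1) * (q ^ i - 1)
      = (∏ i ∈ Icc 1 n, q ^ (i - 1)) * ∏ i ∈ Icc 1 n, (q ^ (n + 1 - i) - 1) := by
        rw [prod_mul_distrib, prod_Icc_one_reflect (fun i => q ^ i - 1)]
    _ = ∏ i ∈ Icc 1 n, (q ^ n - q ^ (i - 1)) := by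
        rw [← prod_mul_distrib]
        refine prod_congr rfl fun i hi => ?_
        obtain ⟨hi1, hin⟩ := mem_Icc.mp hi
        rw [Nat.pow_sub_pow_eq_mul (by omega : i - 1 ≤ n), show n - (i - 1) = n + 1 - i by omega]

theorem stmt17 (n : ℕ) :
    ∏ i ∈ Finset.Icc 1 n, 2 ^ (i - 1) * (2 ^ i - 1) =
      ∏ i ∈ Finset.Icc 1 n, (2 ^ n - 2 ^ (i - 1)) :=
  prod_pow_mul_pow_sub_one_eq_prod_pow_sub_pow 2 n
end
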